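/- arXiv:1803.09532 — 5 statements merged into one kernel-verified Lean document; each statement's English description precedes it below -/
import Mathlib

section
/- Let ℓ > 0 and α > 0 and let μ be the standard Gaussian measure on ℝ. Then for every integer m ≥ 0 the eigenfunctions φ_n of the Gaussian kernel satisfy ∫_ℝ φ_{2m+1} dμ = 0 and ∫_ℝ φ_{2m} dμ = (β/(1+2δ²))^{1/2} · (√((2m)!)/(2^m · m!)) · (2α²β²/(1+2δ²) − 1)^m. -/
open MeasureTheory ProbabilityTheory

/-- Probabilists' Hermite polynomial evaluated at a real number. -/
noncomputable def H (n : ℕ) (x : ℝ) : ℝ := Polynomial.aeval x (Polynomial.hermite n)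

/-- The standard Gaussian measure on ℝ. -/
noncomputable def stdGauss : Measure ℝ := gaussianReal 0 1

/-!
Absorbing the density of `μ`, `∫ φₙ dμ` is a multiple of `Iₙ = ∫ Heₙ(c x) e^{-b x²} dx` with
`c = √2 α β` and `b = δ² + 1/2`. Gaussian integration by parts,
`∫ x p(x) e^{-b x²} = (2b)⁻¹ ∫ p'(x) e^{-b x²}`, combined with `Heₙ₊₂ = X Heₙ₊₁ - (n+1) Heₙ` and
`Heₙ₊₁' = (n+1) Heₙ`, gives `Iₙ₊₂ = (n+1) (c²/(2b) - 1) Iₙ`. As `I₁ = 0` and `I₀ = √(π/b)`, the odd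
moments vanish and `I₂ₘ = (2m)!/(2ᵐ m!) · (c²/(2b) - 1)ᵐ · √(π/b)`.
-/

open Polynomial Real

namespace Polynomial

theorem derivative_hermite_succ (n : ℕ) :
    derivative (hermite (n + 1)) = (n + 1 : ℤ[X]) * hermite n := by
  induction n with
  | zero => simp
  | succ n ih =>
    rw [hermite_succ (n + 1), derivative_sub, derivative_mul, derivative_X, ih, derivative_mul,
      hermite_succ n]
    simp only [derivative_add, derivative_natCast, derivative_one]
    push_cast
    ring

theorem hermite_add_two (n : ℕ) :
    hermite (n + 2) = X * hermite (n + 1) - (n + 1 : ℤ[X]) * hermite n := by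
  rw [hermite_succ (n + 1), derivative_hermite_succ]

end Polynomial

noncomputable def scaledHermite (c : ℝ) (n : ℕ) : ℝ[X] :=
  ((hermite n).map (Int.castRingHom ℝ)).comp (C c * X)

theorem eval_scaledHermite (c x : ℝ) (n : ℕ) :
    (scaledHermite c n).eval x = aeval (c * x) (hermite n) := by
  simp [scaledHermite, eval_comp, aeval_def, eval_map]

theorem scaledHermite_add_two (c : ℝ) (n : ℕ) :
    scaledHermite c (n + 2) =
      C c * (X * scaledHermite c (n + 1)) - C ((n : ℝ) + 1) * scaledHermite c n := by
  rw [scaledHermite, hermite_add_two]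
  simp only [Polynomial.map_sub, Polynomial.map_mul, Polynomial.map_add, Polynomial.map_natCast,
    Polynomial.map_one, Polynomial.map_X, sub_comp, mul_comp, add_comp, natCast_comp, one_comp,
    X_comp, scaledHermite]
  simp only [← C_eq_natCast, ← C_1, ← C_add]
  ring

theorem derivative_scaledHermite_succ (c : ℝ) (n : ℕ) :
    derivative (scaledHermite c (n + 1)) = C (c * ((n : ℝ) + 1)) * scaledHermite c n := by
  rw [scaledHermite, derivative_comp, derivative_map, derivative_hermite_succ]
  simp only [Polynomial.map_mul, Polynomial.map_add, Polynomial.map_natCast, Polynomial.map_one,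
    mul_comp, add_comp, natCast_comp, one_comp, derivative_mul, derivative_C, derivative_X,
    scaledHermite]
  simp only [map_mul, map_add, map_one, map_natCast]
  ring

theorem integrable_pow_mul_exp_neg_mul_sq {b : ℝ} (hb : 0 < b) (n : ℕ) :
    Integrable fun x : ℝ => x ^ n * exp (-b * x ^ 2) := by
  simpa [Real.rpow_natCast] using
    integrable_rpow_mul_exp_neg_mul_sq hb (neg_one_lt_zero.trans_le n.cast_nonneg)

theorem Polynomial.integrable_eval_mul_exp_neg_mul_sq {b : ℝ} (hb : 0 < b) (p : ℝ[X]) :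
    Integrable fun x => p.eval x * exp (-b * x ^ 2) := by
  induction p using Polynomial.induction_on' with
  | add p q hp hq =>
    exact (hp.add hq).congr (.of_forall fun x => by simp only [Pi.add_apply, eval_add, add_mul])
  | monomial n a => simpa [mul_assoc] using (integrable_pow_mul_exp_neg_mul_sq hb n).const_mul a

theorem Polynomial.integral_eval_X_mul_mul_exp_neg_mul_sq {b : ℝ} (hb : 0 < b) (p : ℝ[X]) :
    ∫ x, (X * p).eval x * exp (-b * x ^ 2) =
      (2 * b)⁻¹ * ∫ x, (derivative p).eval x * exp (-b * x ^ 2) := by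
  have hderiv : ∀ x, HasDerivAt (fun x => p.eval x * exp (-b * x ^ 2))
      ((derivative p - C (2 * b) * (X * p)).eval x * exp (-b * x ^ 2)) x := by
    intro x
    refine ((p.hasDerivAt x).fun_mul ((hasDerivAt_pow 2 x).const_mul (-b)).exp).congr_deriv ?_
    simp only [eval_sub, eval_mul, eval_C, eval_X]
    push_cast
    ring
  have hzero := integral_eq_zero_of_hasDerivAt_of_integrable hderiv
    (integrable_eval_mul_exp_neg_mul_sq hb _) (integrable_eval_mul_exp_neg_mul_sq hb p)
  simp only [eval_sub, sub_mul, eval_mul (p := C _), eval_C, mul_assoc (2 * b)] at hzero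
  rw [integral_sub (integrable_eval_mul_exp_neg_mul_sq hb _)
    ((integrable_eval_mul_exp_neg_mul_sq hb _).const_mul _), integral_const_mul] at hzero
  rw [eq_inv_mul_iff_mul_eq₀ (by positivity)]
  linarith

theorem two_mul_add_one_eq_zero_of_add_two_eq {I : ℕ → ℝ} {r : ℝ}
    (hrec : ∀ n, I (n + 2) = (n + 1) * r * I n) (h1 : I 1 = 0) (m : ℕ) : I (2 * m + 1) = 0 := by
  induction m with
  | zero => exact h1
  | succ m ih => rw [show 2 * (m + 1) + 1 = 2 * m + 1 + 2 by ring, hrec, ih, mul_zero]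

theorem two_mul_eq_of_add_two_eq {I : ℕ → ℝ} {r : ℝ}
    (hrec : ∀ n, I (n + 2) = (n + 1) * r * I n) (m : ℕ) :
    I (2 * m) = ((2 * m).factorial / (2 ^ m * m.factorial) : ℝ) * r ^ m * I 0 := by
  induction m with
  | zero => simp
  | succ m ih =>
    rw [show 2 * (m + 1) = 2 * m + 2 by ring, hrec, ih, Nat.factorial_succ (2 * m + 1),
      Nat.factorial_succ (2 * m), Nat.factorial_succ m]
    push_cast
    field_simp
    ring

theorem integral_scaledHermite_add_two {b : ℝ} (hb : 0 < b) (c : ℝ) (n : ℕ) :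
    ∫ x, (scaledHermite c (n + 2)).eval x * exp (-b * x ^ 2) =
      (n + 1) * (c ^ 2 / (2 * b) - 1) * ∫ x, (scaledHermite c n).eval x * exp (-b * x ^ 2) := by
  have hint := integrable_eval_mul_exp_neg_mul_sq hb
  calc ∫ x, (scaledHermite c (n + 2)).eval x * exp (-b * x ^ 2)
      = c * (∫ x, (X * scaledHermite c (n + 1)).eval x * exp (-b * x ^ 2)) -
          (n + 1) * ∫ x, (scaledHermite c n).eval x * exp (-b * x ^ 2) := by
        rw [← integral_const_mul, ← integral_const_mul,
          ← integral_sub ((hint _).const_mul _) ((hint _).const_mul _)]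
        congr 1 with x
        rw [scaledHermite_add_two]
        simp only [eval_sub, eval_mul, eval_C]
        ring
    _ = _ := by
        rw [integral_eval_X_mul_mul_exp_neg_mul_sq hb, derivative_scaledHermite_succ]
        simp only [eval_mul, eval_C, mul_assoc, integral_const_mul]
        field_simp

theorem integral_scaledHermite_odd {b : ℝ} (hb : 0 < b) (c : ℝ) (m : ℕ) :
    ∫ x, (scaledHermite c (2 * m + 1)).eval x * exp (-b * x ^ 2) = 0 := by
  refine two_mul_add_one_eq_zero_of_add_two_eq
    (I := fun n => ∫ x, (scaledHermite c n).eval x * exp (-b * x ^ 2))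
    (integral_scaledHermite_add_two hb c) ?_ m
  have h1 : scaledHermite c 1 = X * C c := by
    rw [scaledHermite, hermite_one, Polynomial.map_X, X_comp, X_mul_C]
  rw [h1, integral_eval_X_mul_mul_exp_neg_mul_sq hb, derivative_C]
  simp

theorem integral_scaledHermite_even {b : ℝ} (hb : 0 < b) (c : ℝ) (m : ℕ) :
    ∫ x, (scaledHermite c (2 * m)).eval x * exp (-b * x ^ 2) =
      ((2 * m).factorial / (2 ^ m * m.factorial) : ℝ) * (c ^ 2 / (2 * b) - 1) ^ m * √(π / b) := by
  rw [two_mul_eq_of_add_two_eq (I := fun n => ∫ x, (scaledHermite c n).eval x * exp (-b * x ^ 2))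
    (integral_scaledHermite_add_two hb c)]
  rw [show scaledHermite c 0 = 1 by simp [scaledHermite]]
  simp only [eval_one, one_mul, integral_gaussian]

theorem integral_stdGauss_eq_integral_mul_exp (f : ℝ → ℝ) :
    ∫ x, f x ∂stdGauss = (√(2 * π))⁻¹ * ∫ x, f x * exp (-(1 / 2) * x ^ 2) := by
  rw [stdGauss, integral_gaussianReal_eq_integral_smul one_ne_zero, ← integral_const_mul]
  congr 1 with x
  simp only [gaussianPDFReal, smul_eq_mul, NNReal.coe_one, mul_one, sub_zero]
  ring_nf

theorem integral_stdGauss_mul_exp_mul_H (s d c : ℝ) (n : ℕ) :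
    ∫ x, s * exp (-d * x ^ 2) * H n (c * x) ∂stdGauss =
      (√(2 * π))⁻¹ * s * ∫ x, (scaledHermite c n).eval x * exp (-(d + 1 / 2) * x ^ 2) := by
  rw [integral_stdGauss_eq_integral_mul_exp, mul_assoc (√(2 * π))⁻¹, ← integral_const_mul s]
  congr 2 with x
  rw [H, ← eval_scaledHermite, show -(d + 1 / 2) * x ^ 2 = -d * x ^ 2 + -(1 / 2) * x ^ 2 by ring,
    exp_add]
  ring

theorem stmt_0_general (α : ℝ)
    (ε β δ2 : ℝ)
    (hβ : β = (1 + (2 * ε / α) ^ 2) ^ ((1 : ℝ) / 4))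
    (hδ2 : δ2 = α ^ 2 * (β ^ 2 - 1) / 2)
    (φ : ℕ → ℝ → ℝ)
    (hφ : ∀ n x, φ n x = Real.sqrt (β / (n.factorial : ℝ)) * Real.exp (-δ2 * x ^ 2) *
      H n (Real.sqrt 2 * α * β * x))
    (m : ℕ) :
    (∫ x, φ (2 * m + 1) x ∂stdGauss) = 0 ∧
    (∫ x, φ (2 * m) x ∂stdGauss) =
      Real.sqrt (β / (1 + 2 * δ2)) * (Real.sqrt (((2 * m).factorial : ℝ)) / (2 ^ m * (m.factorial : ℝ))) *
        (2 * α ^ 2 * β ^ 2 / (1 + 2 * δ2) - 1) ^ m := by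
  have hβ1 : 1 ≤ β := hβ ▸ one_le_rpow (le_add_of_nonneg_right (sq_nonneg _)) (by norm_num)
  have hb : 0 < δ2 + 1 / 2 := by
    have : 0 ≤ α ^ 2 * (β ^ 2 - 1) := mul_nonneg (sq_nonneg α) (by nlinarith)
    rw [hδ2]
    linarith
  have hφ_int (n : ℕ) : ∫ x, φ n x ∂stdGauss = (√(2 * π))⁻¹ * √(β / n.factorial) *
      ∫ x, (scaledHermite (√2 * α * β) n).eval x * exp (-(δ2 + 1 / 2) * x ^ 2) := by
    simp_rw [hφ]
    exact integral_stdGauss_mul_exp_mul_H ..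
  refine ⟨by rw [hφ_int, integral_scaledHermite_odd hb, mul_zero], ?_⟩
  rw [hφ_int, integral_scaledHermite_even hb, show 1 + 2 * δ2 = 2 * (δ2 + 1 / 2) by ring,
    mul_pow, mul_pow, sq_sqrt zero_le_two]
  set F : ℝ := ((2 * m).factorial : ℝ)
  have hF : 0 < F := by positivity
  have key : (√(2 * π))⁻¹ * √(β / F) * √(π / (δ2 + 1 / 2)) * F =
      √(β / (2 * (δ2 + 1 / 2))) * √F := by
    rw [sqrt_div' _ hF.le, sqrt_div' _ hb.le, sqrt_div' _ (by positivity), sqrt_mul zero_le_two,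
      sqrt_mul zero_le_two]
    field_simp
    rw [sq_sqrt hF.le]
  linear_combination ((2 * α ^ 2 * β ^ 2 / (2 * (δ2 + 1 / 2)) - 1) ^ m / (2 ^ m * m.factorial)) * key

theorem stmt_0 (ℓ α : ℝ) (hℓ : 0 < ℓ) (hα : 0 < α)
    (ε β δ2 : ℝ)
    (hε : ε = 1 / (Real.sqrt 2 * ℓ))
    (hβ : β = (1 + (2 * ε / α) ^ 2) ^ ((1 : ℝ) / 4))
    (hδ2 : δ2 = α ^ 2 * (β ^ 2 - 1) / 2)
    (φ : ℕ → ℝ → ℝ)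
    (hφ : ∀ n x, φ n x = Real.sqrt (β / (n.factorial : ℝ)) * Real.exp (-δ2 * x ^ 2) *
      H n (Real.sqrt 2 * α * β * x))
    (m : ℕ) :
    (∫ x, φ (2 * m + 1) x ∂stdGauss) = 0 ∧
    (∫ x, φ (2 * m) x ∂stdGauss) =
      Real.sqrt (β / (1 + 2 * δ2)) * (Real.sqrt (((2 * m).factorial : ℝ)) / (2 ^ m * (m.factorial : ℝ))) *
        (2 * α ^ 2 * β ^ 2 / (1 + 2 * δ2) - 1) ^ m :=
  stmt_0_general α ε β δ2 hβ hδ2 φ hφ m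
end

section
/- Let N ≥ 1 and let x_1, …, x_N be the N distinct real roots of H_N. Define w_i = (N−1)!/(N·H_{N−1}(x_i)²). Then for all 1 ≤ i, j ≤ N: ∑_{n=0}^{N−1} H_n(x_i)·H_n(x_j)/n! equals 0 if i ≠ j and equals 1/w_i if i = j. -/
open Polynomial

lemma hermite_deriv (n : ℕ) :
    derivative (hermite (n+1)) = ((n : ℤ) + 1) • hermite n := by
  induction n with
  | zero => simp [hermite_one, hermite_zero]
  | succ m ih =>
    rw [hermite_succ (m+1), derivative_sub, derivative_mul, derivative_X, ih]
    rw [hermite_succ m]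
    push_cast
    simp only [smul_sub, smul_smul]
    ring_nf
    simp [smul_sub, mul_comm]
    ring

lemma hermite_rec (n : ℕ) :
    hermite (n+2) = X * hermite (n+1) - ((n : ℤ) + 1) • hermite n := by
  rw [hermite_succ (n+1), hermite_deriv]

lemma H_zero (x : ℝ) : H 0 x = 1 := by simp [H, hermite_zero]

lemma H_one (x : ℝ) : H 1 x = x := by simp [H, hermite_one]

lemma H_rec (n : ℕ) (x : ℝ) : H (n+2) x = x * H (n+1) x - ((n : ℝ) + 1) * H n x := by
  simp only [H, hermite_rec n, map_sub, map_mul, aeval_X, zsmul_eq_mul, map_intCast]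
  push_cast
  ring

lemma CD (m : ℕ) (a b : ℝ) :
    (a - b) * ∑ k ∈ Finset.range (m+1), H k a * H k b / (k.factorial : ℝ) =
      (H (m+1) a * H m b - H m a * H (m+1) b) / (m.factorial : ℝ) := by
  induction m with
  | zero => simp [H_zero, H_one]
  | succ m ih =>
    rw [Finset.sum_range_succ, mul_add, ih, H_rec m a, H_rec m b]
    have h1 : ((m.factorial : ℝ)) ≠ 0 := Nat.cast_ne_zero.mpr m.factorial_ne_zero
    have h2 : (((m+1).factorial : ℝ)) ≠ 0 := Nat.cast_ne_zero.mpr (m+1).factorial_ne_zero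
    rw [Nat.factorial_succ]
    push_cast
    field_simp
    ring

lemma Kdiag (m : ℕ) (a : ℝ) :
    ∑ k ∈ Finset.range (m+1), H k a * H k a / (k.factorial : ℝ) =
      (((m : ℝ)+1) * H m a ^ 2 - a * H m a * H (m+1) a + H (m+1) a ^ 2) / (m.factorial : ℝ) := by
  induction m with
  | zero => simp [H_zero, H_one]; ring
  | succ m ih =>
    rw [Finset.sum_range_succ, ih, H_rec m a]
    have h1 : ((m.factorial : ℝ)) ≠ 0 := Nat.cast_ne_zero.mpr m.factorial_ne_zero
    rw [Nat.factorial_succ]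
    push_cast
    field_simp
    ring

theorem stmt_2 (N : ℕ) (hN : 1 ≤ N)
    (x : Fin N → ℝ) (hinj : Function.Injective x)
    (hroot : ∀ i, H N (x i) = 0)
    (w : Fin N → ℝ)
    (hw : ∀ i, w i = ((N - 1).factorial : ℝ) / ((N : ℝ) * H (N - 1) (x i) ^ 2))
    (i j : Fin N) :
    ∑ n ∈ Finset.range N, H n (x i) * H n (x j) / (n.factorial : ℝ) =
      if i = j then 1 / w i else 0 := by
  obtain ⟨m, rfl⟩ : ∃ m, N = m + 1 := ⟨N - 1, (Nat.succ_pred_eq_of_pos hN).symm⟩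
  by_cases hij : i = j
  · subst hij
    simp only [if_pos rfl, hw i, Nat.add_sub_cancel, one_div, inv_div]
    rw [Kdiag m (x i), hroot i]
    push_cast
    ring
  · rw [if_neg hij]
    have hx : x i - x j ≠ 0 := sub_ne_zero.mpr (fun h => hij (hinj h))
    have := CD m (x i) (x j)
    rw [hroot i, hroot j] at this
    simp only [zero_mul, mul_zero, sub_zero, zero_sub, neg_zero, zero_div] at this
    exact (mul_eq_zero.mp this).resolve_left hx
end

section
/- Let N ≥ 1, let x_1, …, x_N be the N distinct real roots of H_N, and define w_i = (N−1)!/(N·H_{N−1}(x_i)²). Then each w_i is positive and for every polynomial p of degree at most 2N−1 one has ∑_{i=1}^N w_i · p(x_i) = ∫_ℝ p dμ; in particular ∑_{i=1}^N w_i = 1. -/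
/-! Stein's identity `𝔼[Z p(Z)] = 𝔼[p'(Z)]` and `He (n+1) = X He n - He n'` give
`𝔼[q He n (Z)] = 𝔼[q⁽ⁿ⁾(Z)]`: `He n` is orthogonal to all polynomials of lower degree and pairs
with a monic polynomial of degree `n` to `n!`. Dividing `p` of degree `≤ 2N - 1` by `He N` leaves
a remainder of degree `< N` with the same values at the roots and the same expectation, and
Lagrange interpolation at the roots integrates it exactly with weights `𝔼[ℓᵢ]`. Here
`ℓᵢ = qᵢ / He N'(xᵢ)` with `qᵢ = He N / (X - xᵢ)` and `He N' = N He (N-1)`, while pairing `qᵢ`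
with `He (N-1) ≡ He (N-1)(xᵢ) mod (X - xᵢ)` gives `𝔼[qᵢ] = (N-1)! / He (N-1)(xᵢ)`. -/

open MeasureTheory ProbabilityTheory

open Polynomial Finset
open scoped Nat

theorem integrable_eval_gaussianReal (μ : ℝ) (v : NNReal) (p : ℝ[X]) :
    Integrable (fun t => p.eval t) (gaussianReal μ v) := by
  induction p using Polynomial.induction_on' with
  | add p q hp hq => simp only [eval_add]; exact hp.add hq
  | monomial n c =>
    simp only [eval_monomial]
    refine Integrable.const_mul ?_ c
    rcases n.eq_zero_or_pos with rfl | hn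
    · simp
    · refine ((memLp_id_gaussianReal (μ := μ) (v := v) n).integrable_norm_pow hn.ne').mono'
        (by fun_prop) (ae_of_all _ fun t => ?_)
      simp [norm_pow]

theorem integrable_gaussianPDFReal_mul_eval (μ : ℝ) {v : NNReal} (hv : v ≠ 0) (p : ℝ[X]) :
    Integrable (fun t => gaussianPDFReal μ v t * p.eval t) := by
  have h := integrable_eval_gaussianReal μ v p
  rw [gaussianReal_of_var_ne_zero _ hv,
    integrable_withDensity_iff_integrable_smul' (measurable_gaussianPDF μ v)
      (ae_of_all _ fun _ => gaussianPDF_lt_top)] at h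
  simpa using h

theorem hasDerivAt_gaussianPDFReal_zero_one (t : ℝ) :
    HasDerivAt (gaussianPDFReal 0 1) (-t * gaussianPDFReal 0 1 t) t := by
  have hpdf : gaussianPDFReal 0 1 = fun s => (√(2 * Real.pi))⁻¹ * Real.exp (-s ^ 2 / 2) := by
    simp [gaussianPDFReal_def]
  have hexp : HasDerivAt (fun s : ℝ => -s ^ 2 / 2) (-t) t :=
    ((hasDerivAt_pow 2 t).neg.div_const 2).congr_deriv (by ring)
  rw [hpdf]
  exact (hexp.exp.const_mul _).congr_deriv (by ring)

theorem integral_mul_eval_gaussianReal_eq_integral_derivative (p : ℝ[X]) :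
    ∫ t, t * p.eval t ∂gaussianReal 0 1 = ∫ t, (derivative p).eval t ∂gaussianReal 0 1 := by
  have hint (q : ℝ[X]) (f : ℝ → ℝ) (hf : ∀ t, f t = gaussianPDFReal 0 1 t * q.eval t) :
      Integrable f := by
    simpa only [← hf] using integrable_gaussianPDFReal_mul_eval 0 one_ne_zero q
  have h := integral_mul_deriv_eq_deriv_mul_of_integrable (u := fun t => p.eval t)
    (v := gaussianPDFReal 0 1) (u' := fun t => (derivative p).eval t)
    (fun t _ => p.hasDerivAt t) (fun t _ => hasDerivAt_gaussianPDFReal_zero_one t)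
    (hint (-(X * p)) _ fun t => by simp; ring) (hint (derivative p) _ fun t => by simp; ring)
    (hint p _ fun t => by simp; ring)
  simp only [mul_neg, neg_mul, integral_neg, neg_inj] at h
  simp only [integral_gaussianReal_eq_integral_smul one_ne_zero, smul_eq_mul]
  calc ∫ t, gaussianPDFReal 0 1 t * (t * p.eval t)
      = ∫ t, p.eval t * (t * gaussianPDFReal 0 1 t) := by congr 1; funext t; ring
    _ = ∫ t, (derivative p).eval t * gaussianPDFReal 0 1 t := h
    _ = ∫ t, gaussianPDFReal 0 1 t * (derivative p).eval t := by congr 1; funext t; ring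

noncomputable def gaussExpectation : ℝ[X] →ₗ[ℝ] ℝ where
  toFun p := ∫ t, p.eval t ∂stdGauss
  map_add' p q := by
    simp only [eval_add]
    exact integral_add (integrable_eval_gaussianReal 0 1 p) (integrable_eval_gaussianReal 0 1 q)
  map_smul' c p := by simp only [eval_smul, smul_eq_mul, integral_const_mul, RingHom.id_apply]

theorem gaussExpectation_apply (p : ℝ[X]) : gaussExpectation p = ∫ t, p.eval t ∂stdGauss := rfl

theorem gaussExpectation_C (c : ℝ) : gaussExpectation (C c) = c := by
  simp [gaussExpectation_apply, stdGauss]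

theorem gaussExpectation_X_mul (p : ℝ[X]) :
    gaussExpectation (X * p) = gaussExpectation (derivative p) := by
  simpa [gaussExpectation_apply, stdGauss] using
    integral_mul_eval_gaussianReal_eq_integral_derivative p

theorem Polynomial.derivative_hermite_succ_s3 (n : ℕ) :
    derivative (hermite (n + 1)) = C ((n : ℤ) + 1) * hermite n := by
  induction n with
  | zero => simp
  | succ n ih =>
    rw [hermite_succ (n + 1), derivative_sub, derivative_mul, derivative_X, one_mul, ih,
      derivative_mul, derivative_C, zero_mul, zero_add, hermite_succ n]
    simp only [map_add, map_natCast, map_one, Nat.cast_add, Nat.cast_one]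
    ring

theorem Polynomial.Monic.iterate_derivative_natDegree {R : Type*} [Semiring R] {q : R[X]}
    (hq : q.Monic) :
    derivative^[q.natDegree] q = C (q.natDegree ! : R) := by
  rw [eq_C_of_natDegree_le_zero ((natDegree_iterate_derivative q _).trans (Nat.sub_self _).le),
    coeff_iterate_derivative, zero_add, hq.coeff_natDegree, Nat.descFactorial_self, nsmul_one]

noncomputable def He (n : ℕ) : ℝ[X] := (hermite n).map (Int.castRingHom ℝ)

theorem eval_He (n : ℕ) (t : ℝ) : (He n).eval t = H n t := by
  rw [He, H, aeval_def, eval₂_eq_eval_map]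
  rfl

theorem He_zero : He 0 = 1 := by simp [He]

theorem He_succ (n : ℕ) : He (n + 1) = X * He n - derivative (He n) := by
  simp [He, hermite_succ, derivative_map]

theorem derivative_He_succ (n : ℕ) : derivative (He (n + 1)) = C ((n : ℝ) + 1) * He n := by
  rw [He, He, derivative_map, derivative_hermite_succ_s3, Polynomial.map_mul, map_C]
  simp

theorem He_monic (n : ℕ) : (He n).Monic := (hermite_monic n).map _

theorem natDegree_He (n : ℕ) : (He n).natDegree = n := by
  rw [He, natDegree_map_eq_of_injective (Int.castRingHom ℝ).injective_int, natDegree_hermite]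

theorem gaussExpectation_mul_He_succ (q : ℝ[X]) (n : ℕ) :
    gaussExpectation (q * He (n + 1)) = gaussExpectation (derivative q * He n) := by
  rw [He_succ, mul_sub, map_sub, mul_left_comm, gaussExpectation_X_mul, derivative_mul, map_add,
    add_sub_cancel_right]

theorem gaussExpectation_mul_He (q : ℝ[X]) (n : ℕ) :
    gaussExpectation (q * He n) = gaussExpectation (derivative^[n] q) := by
  induction n generalizing q with
  | zero => rw [He_zero, mul_one, Function.iterate_zero_apply]
  | succ n ih => rw [gaussExpectation_mul_He_succ, ih, Function.iterate_succ_apply]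

theorem gaussExpectation_mul_He_of_natDegree_lt {q : ℝ[X]} {n : ℕ} (hq : q.natDegree < n) :
    gaussExpectation (q * He n) = 0 := by
  rw [gaussExpectation_mul_He, iterate_derivative_eq_zero hq, map_zero]

theorem gaussExpectation_mul_He_of_monic {q : ℝ[X]} (hq : q.Monic) :
    gaussExpectation (q * He q.natDegree) = q.natDegree ! := by
  rw [gaussExpectation_mul_He, hq.iterate_derivative_natDegree, gaussExpectation_C]

theorem Lagrange.map_eq_sum_eval_smul_basis {F ι M : Type*} [Field F] [DecidableEq ι]
    [AddCommGroup M] [Module F M] (L : F[X] →ₗ[F] M) {s : Finset ι} {v : ι → F}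
    (hvs : Set.InjOn v s) {f : F[X]} (hf : f.degree < #s) :
    L f = ∑ i ∈ s, f.eval (v i) • L (Lagrange.basis s v i) := by
  conv_lhs => rw [Lagrange.eq_interpolate hvs hf]
  simp only [Lagrange.interpolate_apply, map_sum, ← smul_eq_C_mul, map_smul]

theorem eval_He_mul_gaussExpectation_eq_factorial {n : ℕ} {a : ℝ} {q : ℝ[X]}
    (hq : (X - C a) * q = He (n + 1)) : (He n).eval a * gaussExpectation q = n ! := by
  have hmonic : q.Monic := (monic_X_sub_C a).of_mul_monic_left (hq ▸ He_monic _)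
  have hdeg : q.natDegree = n := by
    have := congrArg natDegree hq
    rw [(monic_X_sub_C a).natDegree_mul hmonic, natDegree_X_sub_C, natDegree_He] at this
    omega
  have hsplit : q * He n = C ((He n).eval a) * q + (He n /ₘ (X - C a)) * He (n + 1) := by
    conv_lhs => rw [← modByMonic_add_div (He n) (X - C a), modByMonic_X_sub_C_eq_C_eval]
    rw [← hq]; ring
  have hlow : (He n /ₘ (X - C a)).natDegree < n + 1 := by
    rw [natDegree_divByMonic _ (monic_X_sub_C a), natDegree_He]; omega
  have := gaussExpectation_mul_He_of_monic hmonic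
  rwa [hdeg, hsplit, map_add, gaussExpectation_mul_He_of_natDegree_lt hlow, add_zero,
    ← smul_eq_C_mul, map_smul, smul_eq_mul] at this

theorem eval_He_ne_zero_of_isRoot {n : ℕ} {a : ℝ} (ha : (He (n + 1)).IsRoot a) :
    (He n).eval a ≠ 0 := by
  intro h0
  have := eval_He_mul_gaussExpectation_eq_factorial (mul_divByMonic_eq_iff_isRoot.mpr ha)
  rw [h0, zero_mul] at this
  exact n.factorial_ne_zero (by exact_mod_cast this.symm)

theorem He_eq_nodal {n : ℕ} {x : Fin n → ℝ} (hx : Function.Injective x)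
    (hroot : ∀ i, (He n).eval (x i) = 0) : He n = Lagrange.nodal univ x := by
  refine eq_of_degree_le_of_eval_index_eq univ hx.injOn ?_ ?_ ?_ ?_
  · simp [degree_eq_natDegree (He_monic n).ne_zero, natDegree_He]
  · rw [Lagrange.degree_nodal, degree_eq_natDegree (He_monic n).ne_zero, natDegree_He]; simp
  · rw [(He_monic n).leadingCoeff, Lagrange.nodal_monic.leadingCoeff]
  · intro i hi
    rw [hroot, Lagrange.eval_nodal_at_node hi]

theorem gaussExpectation_modByMonic_He {n : ℕ} {p : ℝ[X]} (hp : p.natDegree ≤ 2 * n + 1) :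
    gaussExpectation (p %ₘ He (n + 1)) = gaussExpectation p := by
  have hlow : (p /ₘ He (n + 1)).natDegree < n + 1 := by
    rw [natDegree_divByMonic _ (He_monic _), natDegree_He]; omega
  conv_rhs => rw [← modByMonic_add_div p (He (n + 1))]
  rw [map_add, mul_comm, gaussExpectation_mul_He_of_natDegree_lt hlow, add_zero]

theorem gaussExpectation_eq_sum_eval_mul_basis {n : ℕ} {x : Fin (n + 1) → ℝ}
    (hx : Function.Injective x)
    (hroot : ∀ i, (He (n + 1)).eval (x i) = 0) {p : ℝ[X]} (hp : p.natDegree ≤ 2 * n + 1) :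
    gaussExpectation p = ∑ i, p.eval (x i) * gaussExpectation (Lagrange.basis univ x i) := by
  have hdeg : (p %ₘ He (n + 1)).degree < #(univ : Finset (Fin (n + 1))) := by
    rw [card_univ, Fintype.card_fin]
    have := degree_modByMonic_lt p (He_monic (n + 1))
    rwa [degree_eq_natDegree (He_monic _).ne_zero, natDegree_He] at this
  rw [← gaussExpectation_modByMonic_He hp, Lagrange.map_eq_sum_eval_smul_basis _ hx.injOn hdeg]
  refine sum_congr rfl fun i _ => ?_
  rw [smul_eq_mul, modByMonic_eq_sub_mul_div, eval_sub, eval_mul, hroot, zero_mul, sub_zero]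

theorem gaussExpectation_basis {n : ℕ} {x : Fin (n + 1) → ℝ} (hx : Function.Injective x)
    (hroot : ∀ i, (He (n + 1)).eval (x i) = 0) (i : Fin (n + 1)) :
    gaussExpectation (Lagrange.basis univ x i) = n ! / ((n + 1) * (He n).eval (x i) ^ 2) := by
  have hnodal := He_eq_nodal hx hroot
  have hq : (X - C (x i)) * Lagrange.nodal (univ.erase i) x = He (n + 1) := by
    rw [hnodal, Lagrange.nodal_eq_mul_nodal_erase (mem_univ i)]
  have hE := eval_He_mul_gaussExpectation_eq_factorial hq
  have hne := eval_He_ne_zero_of_isRoot (hroot i)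
  rw [Lagrange.basis_eq_prod_sub_inv_mul_nodal_div (mem_univ i),
    ← Lagrange.nodal_erase_eq_nodal_div (mem_univ i),
    Lagrange.nodalWeight_eq_eval_derivative_nodal (mem_univ i), ← hnodal, derivative_He_succ,
    ← smul_eq_C_mul, map_smul, smul_eq_mul, eval_mul, eval_C]
  field_simp
  linear_combination hE

theorem stmt_3 (N : ℕ) (hN : 1 ≤ N)
    (x : Fin N → ℝ) (hinj : Function.Injective x)
    (hroot : ∀ i, H N (x i) = 0)
    (w : Fin N → ℝ)
    (hw : ∀ i, w i = ((N - 1).factorial : ℝ) / ((N : ℝ) * H (N - 1) (x i) ^ 2)) :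
    (∀ i, 0 < w i) ∧
    (∀ p : Polynomial ℝ, p.natDegree ≤ 2 * N - 1 →
      ∑ i, w i * p.eval (x i) = ∫ t, p.eval t ∂stdGauss) ∧
    ∑ i, w i = 1 := by
  obtain ⟨n, rfl⟩ : ∃ n, N = n + 1 := ⟨N - 1, by omega⟩
  simp only [Nat.add_sub_cancel, ← eval_He] at hroot hw
  have hweight (i : Fin (n + 1)) : gaussExpectation (Lagrange.basis univ x i) = w i := by
    rw [gaussExpectation_basis hinj hroot, hw, Nat.cast_succ]
  have hquad (p : ℝ[X]) (hp : p.natDegree ≤ 2 * (n + 1) - 1) :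
      ∑ i, w i * p.eval (x i) = ∫ t, p.eval t ∂stdGauss := by
    rw [← gaussExpectation_apply, gaussExpectation_eq_sum_eval_mul_basis hinj hroot (by omega)]
    simp only [hweight, mul_comm]
  refine ⟨fun i => ?_, hquad, by simpa [stdGauss] using hquad 1 (by simp)⟩
  have := eval_He_ne_zero_of_isRoot (hroot i)
  rw [hw]
  positivity
end

section
/- For ε > 0 set β(ε) = (1 + 8ε²)^{1/4} and δ(ε)² = (β(ε)² − 1)/4. Then for a real number ρ, the quantity √(ε²/(1/2 + δ(ε)² + ε²)) · e^{ρ/(2β(ε)²)} lies strictly between 0 and 1 for every ε > 0 if and only if ρ ≤ 2. -/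
/-- β(ε) = (1 + 8ε²)^{1/4}. -/
noncomputable def βconst (ε : ℝ) : ℝ := (1 + 8 * ε ^ 2) ^ ((1 : ℝ) / 4)

/-- δ(ε)² = (β(ε)² − 1)/4. -/
noncomputable def δ2const (ε : ℝ) : ℝ := (βconst ε ^ 2 - 1) / 4

/-!
Writing `t = β(ε)²`, one has `t² = 1 + 8ε²`, so `ε` ranges over `(0, ∞)` exactly when `t` ranges
over `(1, ∞)`, and the quantity becomes `√((t - 1)/(t + 1)) · e^{ρ/(2t)}`. It is always positive,
and it is below `1` iff `ρ < t log ((t + 1)/(t - 1))`. The right-hand side exceeds `2` (the series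
of `log (1 + 1/x) - log (1 - 1/x)` starts with `2/x`) and tends to `2` as `t → ∞`; more precisely
`log y ≤ y - 1` bounds it by `2t/(t - 1)`, which equals `ρ` at `t = ρ/(ρ - 2)` when `ρ > 2`.
-/

open Real

lemma sq_sq_βconst (ε : ℝ) : (βconst ε ^ 2) ^ 2 = 1 + 8 * ε ^ 2 := by
  rw [← pow_mul, βconst, ← rpow_natCast, ← rpow_mul (by positivity)]
  norm_num

lemma one_lt_sq_βconst {ε : ℝ} (hε : 0 < ε) : 1 < βconst ε ^ 2 := by
  have h := sq_sq_βconst ε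
  nlinarith [sq_nonneg (βconst ε ^ 2 + 1), sq_pos_of_pos hε]

lemma exists_sq_βconst_eq {t : ℝ} (ht : 1 < t) : ∃ ε > 0, βconst ε ^ 2 = t := by
  have hpos : 0 < (t ^ 2 - 1) / 8 := by nlinarith
  refine ⟨√((t ^ 2 - 1) / 8), sqrt_pos.2 hpos, ?_⟩
  have h := sq_sq_βconst √((t ^ 2 - 1) / 8)
  rw [sq_sqrt hpos.le] at h
  have hβ : 0 ≤ βconst √((t ^ 2 - 1) / 8) ^ 2 := sq_nonneg _
  nlinarith [sq_nonneg (βconst √((t ^ 2 - 1) / 8) ^ 2 - t)]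

lemma div_δ2const_eq (ε : ℝ) :
    ε ^ 2 / (1 / 2 + δ2const ε + ε ^ 2) = (βconst ε ^ 2 - 1) / (βconst ε ^ 2 + 1) := by
  have h := sq_sq_βconst ε
  have ht : 0 < βconst ε ^ 2 + 1 := by positivity
  -- the denominator is `(t + 1)² / 8` and the numerator `(t² - 1) / 8`, with `t = β²`
  rw [δ2const, div_eq_div_iff (by nlinarith) ht.ne']
  nlinarith

lemma sqrt_mul_exp_lt_one_iff {t ρ : ℝ} (ht : 1 < t) :
    √((t - 1) / (t + 1)) * exp (ρ / (2 * t)) < 1 ↔ ρ < t * log ((t + 1) / (t - 1)) := by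
  have ha : 0 < (t - 1) / (t + 1) := div_pos (by linarith) (by linarith)
  rw [← log_neg_iff (mul_pos (sqrt_pos.2 ha) (exp_pos _)),
    log_mul (sqrt_pos.2 ha).ne' (exp_pos _).ne', log_sqrt ha.le, log_exp,
    ← inv_div (t + 1), log_inv]
  constructor <;> intro h <;> field_simp at h ⊢ <;> linarith

lemma two_div_lt_log {t : ℝ} (ht : 1 < t) : 2 / t < log ((t + 1) / (t - 1)) := by
  have hsum := hasSum_log_one_add_inv (by linarith : 0 < (t - 1) / 2)
  have harg : 1 + ((t - 1) / 2)⁻¹ = (t + 1) / (t - 1) := by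
    field_simp [(by linarith : t - 1 ≠ 0)]
    ring
  have hx : 2 * ((t - 1) / 2) + 1 = t := by ring
  rw [harg, hx] at hsum
  have hle := sum_le_hasSum (Finset.range 2) (fun k _ => by positivity) hsum
  norm_num [Finset.sum_range_succ] at hle
  have h3 : 0 < 2 / 3 * (t ^ 3)⁻¹ := by positivity
  rw [div_eq_mul_inv]
  linarith

lemma mul_log_le_two_mul_div {t : ℝ} (ht : 1 < t) : t * log ((t + 1) / (t - 1)) ≤ 2 * t / (t - 1) := by
  have h := log_le_sub_one_of_pos (div_pos (by linarith : 0 < t + 1) (by linarith : 0 < t - 1))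
  have h' : (t + 1) / (t - 1) - 1 = 2 / (t - 1) := by
    field_simp [(by linarith : t - 1 ≠ 0)]
    ring
  calc t * log ((t + 1) / (t - 1)) ≤ t * (2 / (t - 1)) := by gcongr; linarith
    _ = 2 * t / (t - 1) := by ring

lemma forall_lt_mul_log_iff (ρ : ℝ) :
    (∀ t > 1, ρ < t * log ((t + 1) / (t - 1))) ↔ ρ ≤ 2 := by
  refine ⟨fun h => ?_, fun hρ t ht => ?_⟩
  · by_contra! hρ
    have ht : 1 < ρ / (ρ - 2) := by rw [one_lt_div (by linarith)]; linarith
    have heq : 2 * (ρ / (ρ - 2)) / (ρ / (ρ - 2) - 1) = ρ := by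
      field_simp [(by linarith : ρ - 2 ≠ 0)]
      ring
    linarith [h _ ht, mul_log_le_two_mul_div ht]
  · calc ρ ≤ t * (2 / t) := by rw [mul_div_cancel₀ _ (by linarith)]; exact hρ
      _ < t * log ((t + 1) / (t - 1)) := by gcongr; exact two_div_lt_log ht

theorem stmt_7 (ρ : ℝ) :
    (∀ ε : ℝ, 0 < ε →
      Real.sqrt (ε ^ 2 / (1 / 2 + δ2const ε + ε ^ 2)) * Real.exp (ρ / (2 * βconst ε ^ 2))
        ∈ Set.Ioo (0 : ℝ) 1) ↔ ρ ≤ 2 := by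
  have hmem : ∀ t > 1, √((t - 1) / (t + 1)) * exp (ρ / (2 * t)) ∈ Set.Ioo (0 : ℝ) 1 ↔
      ρ < t * log ((t + 1) / (t - 1)) := fun t ht => by
    rw [Set.mem_Ioo, sqrt_mul_exp_lt_one_iff ht, and_iff_right_iff_imp]
    exact fun _ => mul_pos (sqrt_pos.2 (div_pos (by linarith) (by linarith))) (exp_pos _)
  simp_rw [div_δ2const_eq]
  rw [← forall_lt_mul_log_iff]
  constructor
  · intro h t ht
    obtain ⟨ε, hε, rfl⟩ := exists_sq_βconst_eq ht
    exact (hmem _ ht).1 (h ε hε)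
  · intro h ε hε
    exact (hmem _ (one_lt_sq_βconst hε)).2 (h _ (one_lt_sq_βconst hε))
end

section
/- Let ℓ > 0, α > 0, and N ≥ 1, and let x_1, …, x_N be any N pairwise distinct real numbers. Then the N×N matrix Φ with entries Φ_{ij} = φ_{j−1}(x_i), 1 ≤ i, j ≤ N, is invertible. -/
theorem stmt_13 (ℓ α : ℝ) (hℓ : 0 < ℓ) (hα : 0 < α)
    (ε β δ2 : ℝ)
    (hε : ε = 1 / (Real.sqrt 2 * ℓ))
    (hβ : β = (1 + (2 * ε / α) ^ 2) ^ ((1 : ℝ) / 4))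
    (hδ2 : δ2 = α ^ 2 * (β ^ 2 - 1) / 2)
    (φ : ℕ → ℝ → ℝ)
    (hφ : ∀ n x, φ n x = Real.sqrt (β / (n.factorial : ℝ)) * Real.exp (-δ2 * x ^ 2) *
      H n (Real.sqrt 2 * α * β * x))
    (N : ℕ) (hN : 1 ≤ N)
    (x : Fin N → ℝ) (hinj : Function.Injective x) :
    IsUnit (Matrix.of fun i j : Fin N => φ (j : ℕ) (x i)) := by
  have hβpos : 0 < β := by
    rw [hβ]
    exact Real.rpow_pos_of_pos (by positivity) _
  set c : ℝ := Real.sqrt 2 * α * β with hc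
  have hcpos : 0 < c := by
    have h2 : (0:ℝ) < Real.sqrt 2 := Real.sqrt_pos.mpr (by norm_num)
    positivity
  -- polynomials
  set p : Fin N → Polynomial ℝ := fun j => (Polynomial.hermite j).map (Int.castRingHom ℝ) with hp
  have hdeg : ∀ j : Fin N, (p j).natDegree = j := by
    intro j
    rw [hp]
    have hinjC : Function.Injective (Int.castRingHom ℝ) := by
      intro a b h
      simpa using h
    rw [Polynomial.natDegree_map_eq_of_injective hinjC, Polynomial.natDegree_hermite]
  have hmonic : ∀ j : Fin N, (p j).Monic := fun j =>
    (Polynomial.hermite_monic j).map _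
  -- factorization
  have hfact : (Matrix.of fun i j : Fin N => φ (j : ℕ) (x i)) =
      Matrix.diagonal (fun i => Real.exp (-δ2 * (x i) ^ 2)) *
      (Matrix.of fun i j : Fin N => (p j).eval (c * x i)) *
      Matrix.diagonal (fun j : Fin N => Real.sqrt (β / ((j : ℕ).factorial : ℝ))) := by
    ext i j
    rw [Matrix.mul_diagonal, Matrix.diagonal_mul, Matrix.of_apply, Matrix.of_apply, hφ]
    have hH : H (j : ℕ) (Real.sqrt 2 * α * β * x i) = (p j).eval (c * x i) := by
      simp [H, hp, hc, Polynomial.aeval_def, Polynomial.eval₂_eq_eval_map]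
    rw [hH]
    ring
  rw [Matrix.isUnit_iff_isUnit_det, hfact, Matrix.det_mul, Matrix.det_mul,
    Matrix.det_diagonal, Matrix.det_diagonal]
  have hdetE : (Matrix.of fun i j : Fin N => (p j).eval (c * x i)).det ≠ 0 := by
    rw [← Matrix.det_eval_matrixOfPolynomials_eq_det_vandermonde (fun i => c * x i) p hdeg hmonic]
    exact Matrix.det_vandermonde_ne_zero_iff.mpr
      (fun a b hab => hinj (mul_left_cancel₀ (ne_of_gt hcpos) hab))
  refine isUnit_iff_ne_zero.mpr ?_
  have h1 : ∀ i : Fin N, Real.exp (-δ2 * (x i) ^ 2) ≠ 0 := fun i => (Real.exp_pos _).ne'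
  have h2 : ∀ j : Fin N, Real.sqrt (β / ((j : ℕ).factorial : ℝ)) ≠ 0 := by
    intro j
    have : (0:ℝ) < β / ((j : ℕ).factorial : ℝ) := by
      apply div_pos hβpos
      exact_mod_cast Nat.factorial_pos _
    positivity
  exact mul_ne_zero (mul_ne_zero (Finset.prod_ne_zero_iff.mpr fun i _ => h1 i) hdetE)
    (Finset.prod_ne_zero_iff.mpr fun j _ => h2 j)
end
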